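/- arXiv:1309.3529 — 3 statements merged into one kernel-verified Lean document; each statement's English description precedes it below -/
import Mathlib

section
/- Let f : ℝⁿ → ℝ be twice continuously differentiable with gradient g = ∇f, let μ > 0, and let x* be a point at which the Hessian ∇²f(x*) is positive definite; let τ > 0 satisfy τ < 1/‖∇²f(x*)‖. Then there exist a neighborhood N of x* and λ > 0 such that for every x ∈ N, the map y ↦ F_q(x;y) = g(x) + ∇²f(x)(y − x) − P_{[−μ,μ]}(g(x) + ∇²f(x)(y − x) − y/τ) is a bijection (indeed a homeomorphism) from ℝⁿ onto ℝⁿ, and for all y, z ∈ ℝⁿ, ‖z − y‖ ≤ (2/λ)‖F_q(x;z) − F_q(x;y)‖; in particular the inverse maps F_q(x;·)⁻¹ are Lipschitz continuous with the uniform constant 2/λ. -/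
open scoped RealInnerProductSpace

variable {n : ℕ}
local notation "E" => EuclideanSpace ℝ (Fin n)
local notation "CLM" => Matrix.toEuclideanCLM (𝕜 := ℝ)

/-!
Write `A = ∇²f(x)`, `M = τ⁻¹ I - A` and `d = z - y`. Because the clamp `P` is monotone and
nonexpansive, `F_q(x;z) - F_q(x;y) - A d` pairs nonnegatively with `M d` and has norm at most
`‖M d‖`; hence `⟪F_q(x;z) - F_q(x;y), M d⟫ ≥ ⟪A d, M d⟫` and `F_q(x;·)` is Lipschitz.
At `x*` the Hessian is symmetric positive definite with `‖A‖ < 1/τ`, so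
`⟪A d, M d⟫ = τ⁻¹ ⟪A d, d⟫ - ‖A d‖² > 0` for `d ≠ 0`; compactness of the unit sphere and
continuity of the Hessian make this `≥ c ‖d‖²` uniformly for `x` near `x*`, which is the
lower Lipschitz bound. For surjectivity, `M† ∘ F_q(x;·)` is strongly monotone and Lipschitz,
so `y ↦ y - t (M† F_q(x;y) - M† b)` is a contraction for small `t > 0`; its fixed point solves
`F_q(x;y) = b` because `M†` is injective.
-/

open Filter Topology Function

theorem surjective_of_strongly_monotone {H : Type*} [NormedAddCommGroup H]
    [InnerProductSpace ℝ H] [CompleteSpace H] {Φ : H → H} {c L : ℝ} (hc : 0 < c)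
    (hlip : ∀ y z, ‖Φ z - Φ y‖ ≤ L * ‖z - y‖)
    (hmono : ∀ y z, c * ‖z - y‖ ^ 2 ≤ ⟪Φ z - Φ y, z - y⟫) : Surjective Φ := by
  intro b
  -- `y ↦ y - t (Φ y - b)` is a contraction for `t = c / K²`
  set K := max L c
  have hK : 0 < K := lt_max_of_lt_right hc
  have hcK : c ≤ K := le_max_right L c
  set t := c / K ^ 2
  have ht : 0 < t := by positivity
  have htK : t * K ^ 2 = c := by simp only [t]; field_simp
  have htc : t * c ≤ 1 := by
    simp only [t]
    rw [div_mul_eq_mul_div, div_le_one (by positivity)]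
    nlinarith
  set T : H → H := fun y => y - t • (Φ y - b)
  have hT : ∀ y z, ‖T z - T y‖ ≤ (1 - t * c / 2) * ‖z - y‖ := by
    intro y z
    have hlipK : ‖Φ z - Φ y‖ ≤ K * ‖z - y‖ :=
      (hlip y z).trans (mul_le_mul_of_nonneg_right (le_max_left L c) (norm_nonneg _))
    have hsq : ‖T z - T y‖ ^ 2 ≤ ((1 - t * c / 2) * ‖z - y‖) ^ 2 := by
      have hTd : T z - T y = (z - y) - t • (Φ z - Φ y) := by
        simp only [T, smul_sub]; abel
      rw [hTd, norm_sub_sq_real, real_inner_smul_right, norm_smul, Real.norm_of_nonneg ht.le,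
        real_inner_comm]
      have h1 := mul_le_mul_of_nonneg_left (hmono y z) ht.le
      have h2 : (t * ‖Φ z - Φ y‖) ^ 2 ≤ t * c * ‖z - y‖ ^ 2 := by
        calc (t * ‖Φ z - Φ y‖) ^ 2 ≤ (t * (K * ‖z - y‖)) ^ 2 := by gcongr
          _ = t * c * ‖z - y‖ ^ 2 := by rw [← htK]; ring
      nlinarith [sq_nonneg (t * c * ‖z - y‖)]
    exact (pow_le_pow_iff_left₀ (norm_nonneg _) (by nlinarith [norm_nonneg (z - y)])
      two_ne_zero).1 hsq
  have hcontr : ContractingWith (1 - t * c / 2).toNNReal T :=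
    ⟨Real.toNNReal_lt_one.2 (by nlinarith), LipschitzWith.of_dist_le' fun z y => by
      simpa only [dist_eq_norm] using hT y z⟩
  refine ⟨ContractingWith.fixedPoint T hcontr, ?_⟩
  have hfix := hcontr.fixedPoint_isFixedPt
  simp only [IsFixedPt, T, sub_eq_self, smul_eq_zero, ht.ne', false_or, sub_eq_zero] at hfix
  exact hfix

theorem ContinuousLinearMap.injective_adjoint {V : Type*} [NormedAddCommGroup V]
    [InnerProductSpace ℝ V] [FiniteDimensional ℝ V] {M : V →L[ℝ] V} (hM : Injective M) :
    Injective (ContinuousLinearMap.adjoint M) := by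
  have hsurj : Surjective M := LinearMap.injective_iff_surjective.1 hM
  refine LinearMap.ker_eq_bot.1 ?_
  rw [← M.orthogonal_range, LinearMap.range_eq_top.2 hsurj, Submodule.top_orthogonal_eq_bot]

-- Apply positivity of `T` at `v - s⁻¹ • T v`, a form of `‖T v‖² ≤ ‖T‖ ⟪T v, v⟫`.
lemma ContinuousLinearMap.IsPositive.inner_apply_smul_sub_pos {V : Type*} [NormedAddCommGroup V]
    [InnerProductSpace ℝ V] {T : V →L[ℝ] V} (hT : T.IsPositive) {s : ℝ} (hs : ‖T‖ < s) {v : V}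
    (hv : 0 < ⟪T v, v⟫) : 0 < ⟪T v, (s • 1 - T) v⟫ := by
  have hs0 : 0 < s := (norm_nonneg T).trans_lt hs
  have hTv : T v ≠ 0 := fun h => by simp [h] at hv
  have hpos := hT.inner_nonneg_left (v - s⁻¹ • T v)
  have hsymm : ⟪T (T v), v⟫ = ⟪T v, T v⟫ := hT.isSymmetric _ _
  have hTT : ⟪T (T v), T v⟫ ≤ ‖T‖ * ‖T v‖ ^ 2 :=
    calc ⟪T (T v), T v⟫ ≤ ‖T (T v)‖ * ‖T v‖ := real_inner_le_norm _ _
      _ ≤ ‖T‖ * ‖T v‖ * ‖T v‖ := by gcongr; exact T.le_opNorm _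
      _ = _ := by ring
  simp only [map_sub, map_smul, inner_sub_left, inner_sub_right, real_inner_smul_left,
    real_inner_smul_right, hsymm, real_inner_self_eq_norm_sq] at hpos
  simp only [sub_apply, smul_apply, one_apply_eq_self, inner_sub_right, real_inner_smul_right,
    real_inner_self_eq_norm_sq]
  have hTv2 : 0 < ‖T v‖ ^ 2 := by positivity
  have hlt : s⁻¹ * ⟪T (T v), T v⟫ < ‖T v‖ ^ 2 :=
    calc s⁻¹ * ⟪T (T v), T v⟫ ≤ s⁻¹ * (‖T‖ * ‖T v‖ ^ 2) := by gcongr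
      _ < s⁻¹ * (s * ‖T v‖ ^ 2) := by gcongr
      _ = ‖T v‖ ^ 2 := by field_simp
  have hscaled : s * (⟪T v, v⟫ - s⁻¹ * ‖T v‖ ^ 2 - (s⁻¹ * ‖T v‖ ^ 2 -
      s⁻¹ * (s⁻¹ * ⟪T (T v), T v⟫))) = s * ⟪T v, v⟫ - 2 * ‖T v‖ ^ 2 + s⁻¹ * ⟪T (T v), T v⟫ := by
    field_simp; ring
  linarith [mul_nonneg hs0.le hpos]

lemma eventually_forall_mul_norm_sq_le {X V : Type*} [TopologicalSpace X] [NormedAddCommGroup V]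
    [NormedSpace ℝ V] [ProperSpace V] {q : X → V → ℝ} (hq : Continuous (uncurry q))
    (hsmul : ∀ x (t : ℝ) v, q x (t • v) = t ^ 2 * q x v) {x₀ : X}
    (hpos : ∀ v ≠ 0, 0 < q x₀ v) : ∃ c > 0, ∀ᶠ x in 𝓝 x₀, ∀ v, c * ‖v‖ ^ 2 ≤ q x v := by
  have hS := isCompact_sphere (0 : V) 1
  obtain ⟨c, hc, hcq⟩ := hS.exists_forall_le' (hq.comp (Continuous.prodMk_right x₀)).continuousOn
    fun v hv => hpos v (ne_zero_of_mem_unit_sphere ⟨v, hv⟩)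
  refine ⟨c / 2, half_pos hc, ?_⟩
  have hev : ∀ᶠ x in 𝓝 x₀, ∀ v ∈ Metric.sphere (0 : V) 1, c / 2 < q x v :=
    hS.eventually_forall_of_forall_eventually fun v hv => by
      have hcv : c ≤ q x₀ v := hcq v hv
      exact continuousAt_const.eventually_lt hq.continuousAt
        (show c / 2 < uncurry q (x₀, v) by rw [uncurry_apply_pair]; linarith)
  filter_upwards [hev] with x hx v
  rcases eq_or_ne v 0 with rfl | hv
  · simpa using (hsmul x 0 0).ge
  · have hv' : ‖v‖ ≠ 0 := norm_ne_zero_iff.2 hv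
    have hu : ‖v‖⁻¹ • v ∈ Metric.sphere (0 : V) 1 := by
      simp [norm_smul, hv']
    have := hsmul x ‖v‖ (‖v‖⁻¹ • v)
    rw [smul_smul, mul_inv_cancel₀ hv', one_smul] at this
    rw [this]
    nlinarith [hx _ hu, sq_nonneg ‖v‖, sq_pos_of_ne_zero hv']

lemma eventually_forall_mul_norm_sq_le_inner_smul_sub {X V : Type*} [TopologicalSpace X]
    [NormedAddCommGroup V] [InnerProductSpace ℝ V] [FiniteDimensional ℝ V]
    {A : X → V →L[ℝ] V} (hA : Continuous A) {x₀ : X} (hA₀ : (A x₀).IsPositive)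
    (hA₀pos : ∀ v ≠ 0, 0 < ⟪A x₀ v, v⟫) {s : ℝ} (hs : ‖A x₀‖ < s) :
    ∃ c > 0, ∀ᶠ x in 𝓝 x₀, ∀ v, c * ‖v‖ ^ 2 ≤ ⟪A x v, (s • 1 - A x) v⟫ := by
  have hAfst := hA.comp (continuous_fst (X := X) (Y := V))
  exact eventually_forall_mul_norm_sq_le
    ((hAfst.clm_apply continuous_snd).inner ((continuous_const.sub hAfst).clm_apply continuous_snd))
    (fun x t v => by simp only [map_smul, real_inner_smul_left, real_inner_smul_right]; ring)
    fun v hv => hA₀.inner_apply_smul_sub_pos hs (hA₀pos v hv)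

lemma continuous_hessian {V : Type*} [NormedAddCommGroup V] [InnerProductSpace ℝ V]
    [CompleteSpace V] {f : V → ℝ} (hf : ContDiff ℝ 2 f) {g : V → V}
    (hg : ∀ y, HasGradientAt f (g y) y) {H : V → V →L[ℝ] V} (hH : ∀ y, HasFDerivAt g (H y) y) :
    Continuous H := by
  have hg_eq : g = (InnerProductSpace.toDual ℝ V).symm ∘ fderiv ℝ f := funext fun y => by
    simp [(hg y).hasFDerivAt.fderiv]
  have hg1 : ContDiff ℝ 1 g :=
    hg_eq ▸ (InnerProductSpace.toDual ℝ V).symm.contDiff.comp (hf.fderiv_right le_rfl)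
  have hH_eq : H = fderiv ℝ g := funext fun y => (hH y).fderiv.symm
  exact hH_eq ▸ hg1.continuous_fderiv one_ne_zero

lemma Matrix.PosDef.isPositive_toEuclideanCLM {ι : Type*} [Fintype ι] [DecidableEq ι]
    {M : Matrix ι ι ℝ} (hM : M.PosDef) : (Matrix.toEuclideanCLM (𝕜 := ℝ) M).IsPositive := by
  rw [← ContinuousLinearMap.isPositive_toLinearMap_iff,
    Matrix.coe_toEuclideanCLM_eq_toEuclideanLin, Matrix.isPositive_toEuclideanLin_iff]
  exact hM.posSemidef

lemma Matrix.PosDef.inner_toEuclideanCLM_self_pos {ι : Type*} [Fintype ι] [DecidableEq ι]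
    {M : Matrix ι ι ℝ} (hM : M.PosDef) {v : EuclideanSpace ℝ ι} (hv : v ≠ 0) :
    0 < ⟪Matrix.toEuclideanCLM (𝕜 := ℝ) M v, v⟫ := by
  rw [real_inner_comm, Matrix.inner_toEuclideanCLM]
  exact hM.dotProduct_mulVec_pos (by simpa using hv)

section Clamp

variable {ι : Type*} [Fintype ι]

def clampVec (μ : ℝ) (v : EuclideanSpace ℝ ι) : EuclideanSpace ℝ ι :=
  WithLp.toLp 2 fun i => max (-μ) (min μ (v i))

lemma monotone_clamp (μ : ℝ) : Monotone fun t : ℝ => max (-μ) (min μ t) :=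
  fun _ _ h => max_le_max le_rfl (min_le_min le_rfl h)

lemma lipschitzWith_clamp (μ : ℝ) : LipschitzWith 1 fun t : ℝ => max (-μ) (min μ t) :=
  (LipschitzWith.id.const_min μ).const_max (-μ)

lemma inner_clampVec_sub_nonneg (μ : ℝ) (u v : EuclideanSpace ℝ ι) :
    0 ≤ ⟪clampVec μ u - clampVec μ v, u - v⟫ := by
  rw [PiLp.inner_apply]
  refine Finset.sum_nonneg fun i _ => ?_
  simp only [clampVec, PiLp.sub_apply, RCLike.inner_apply, conj_trivial]
  rcases le_total (u i) (v i) with h | h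
  · exact mul_nonneg_of_nonpos_of_nonpos (sub_nonpos.2 h) (sub_nonpos.2 (monotone_clamp μ h))
  · exact mul_nonneg (sub_nonneg.2 h) (sub_nonneg.2 (monotone_clamp μ h))

lemma norm_clampVec_sub_le (μ : ℝ) (u v : EuclideanSpace ℝ ι) :
    ‖clampVec μ u - clampVec μ v‖ ≤ ‖u - v‖ := by
  simp only [EuclideanSpace.norm_eq]
  refine Real.sqrt_le_sqrt (Finset.sum_le_sum fun i _ => ?_)
  have h := (lipschitzWith_clamp μ).dist_le_mul (u i) (v i)
  simp only [NNReal.coe_one, one_mul, dist_eq_norm] at h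
  simpa [clampVec] using pow_le_pow_left₀ (norm_nonneg _) h 2

end Clamp

section ModelOptimality

variable {V : Type*} [NormedAddCommGroup V] [InnerProductSpace ℝ V]

-- `F_q(x;y)` with gradient `a = g(x)`, Hessian `A = ∇²f(x)` and `P = P_{[-μ,μ]}`
noncomputable def modelOptimality (P : V → V) (A : V →L[ℝ] V) (τ : ℝ) (a x y : V) : V :=
  a + A (y - x) - P (a + A (y - x) - τ⁻¹ • y)

variable {P : V → V} {A : V →L[ℝ] V} {τ : ℝ} {a x : V}

lemma modelOptimality_sub (y z : V) : ∃ u v,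
    modelOptimality P A τ a x z - modelOptimality P A τ a x y = A (z - y) - (P u - P v) ∧
    (τ⁻¹ • 1 - A) (z - y) = -(u - v) := by
  refine ⟨a + A (z - x) - τ⁻¹ • z, a + A (y - x) - τ⁻¹ • y, ?_, ?_⟩
  · simp only [modelOptimality, map_sub]; abel
  · simp only [map_sub, sub_apply, smul_apply, one_apply_eq_self]
    abel

lemma inner_modelOptimality_sub_ge (hP : ∀ u v, 0 ≤ ⟪P u - P v, u - v⟫) (y z : V) :
    ⟪A (z - y), (τ⁻¹ • 1 - A) (z - y)⟫ ≤
      ⟪modelOptimality P A τ a x z - modelOptimality P A τ a x y, (τ⁻¹ • 1 - A) (z - y)⟫ := by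
  obtain ⟨u, v, hF, hM⟩ := modelOptimality_sub (P := P) (A := A) (τ := τ) (a := a) (x := x) y z
  rw [hF, hM, inner_sub_left, inner_neg_right, inner_neg_right]
  linarith [hP u v]

lemma norm_modelOptimality_sub_le (hP : ∀ u v, ‖P u - P v‖ ≤ ‖u - v‖) (y z : V) :
    ‖modelOptimality P A τ a x z - modelOptimality P A τ a x y‖ ≤
      (‖A‖ + ‖τ⁻¹ • 1 - A‖) * ‖z - y‖ := by
  obtain ⟨u, v, hF, hM⟩ := modelOptimality_sub (P := P) (A := A) (τ := τ) (a := a) (x := x) y z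
  have hPM : ‖P u - P v‖ ≤ ‖τ⁻¹ • 1 - A‖ * ‖z - y‖ := by
    calc ‖P u - P v‖ ≤ ‖(τ⁻¹ • 1 - A) (z - y)‖ := by rw [hM, norm_neg]; exact hP u v
      _ ≤ _ := ContinuousLinearMap.le_opNorm _ _
  calc _ ≤ ‖A (z - y)‖ + ‖P u - P v‖ := hF ▸ norm_sub_le _ _
    _ ≤ ‖A‖ * ‖z - y‖ + ‖τ⁻¹ • 1 - A‖ * ‖z - y‖ := add_le_add (A.le_opNorm _) hPM
    _ = _ := by ring

lemma continuous_modelOptimality (hP : ∀ u v, ‖P u - P v‖ ≤ ‖u - v‖) :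
    Continuous (modelOptimality P A τ a x) :=
  (LipschitzWith.of_dist_le' fun z y => by
    simpa only [dist_eq_norm] using norm_modelOptimality_sub_le hP y z).continuous

variable {c : ℝ} (hcoer : ∀ d, c * ‖d‖ ^ 2 ≤ ⟪A d, (τ⁻¹ • 1 - A) d⟫)
include hcoer

lemma norm_sub_le_modelOptimality_sub (hc : 0 < c) (hP : ∀ u v, 0 ≤ ⟪P u - P v, u - v⟫)
    (y z : V) : ‖z - y‖ ≤
      ‖τ⁻¹ • 1 - A‖ / c * ‖modelOptimality P A τ a x z - modelOptimality P A τ a x y‖ := by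
  rcases (norm_nonneg (z - y)).eq_or_lt with h | h
  · rw [← h]; positivity
  rw [div_mul_eq_mul_div, le_div_iff₀ hc]
  refine le_of_mul_le_mul_right ?_ h
  calc ‖z - y‖ * c * ‖z - y‖ = c * ‖z - y‖ ^ 2 := by ring
    _ ≤ ⟪_, (τ⁻¹ • 1 - A) (z - y)⟫ := (hcoer _).trans (inner_modelOptimality_sub_ge hP y z)
    _ ≤ ‖modelOptimality P A τ a x z - modelOptimality P A τ a x y‖ *
          ‖(τ⁻¹ • 1 - A) (z - y)‖ := real_inner_le_norm _ _
    _ ≤ ‖modelOptimality P A τ a x z - modelOptimality P A τ a x y‖ *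
          (‖τ⁻¹ • 1 - A‖ * ‖z - y‖) := by gcongr; exact ContinuousLinearMap.le_opNorm _ _
    _ = _ := by ring

lemma modelOptimality_injective (hc : 0 < c) (hP : ∀ u v, 0 ≤ ⟪P u - P v, u - v⟫) :
    Injective (modelOptimality P A τ a x) := by
  intro y z h
  have := norm_sub_le_modelOptimality_sub (a := a) (x := x) hcoer hc hP z y
  rw [h, sub_self, norm_zero, mul_zero] at this
  exact sub_eq_zero.1 (norm_le_zero_iff.1 this)

lemma modelOptimality_surjective [FiniteDimensional ℝ V] (hc : 0 < c)
    (hPmono : ∀ u v, 0 ≤ ⟪P u - P v, u - v⟫) (hPlip : ∀ u v, ‖P u - P v‖ ≤ ‖u - v‖) :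
    Surjective (modelOptimality P A τ a x) := by
  set M := τ⁻¹ • 1 - A
  set F := modelOptimality P A τ a x
  have hMinj : Injective M := (injective_iff_map_eq_zero M).2 fun d hd => by
    have h := hcoer d
    rw [hd, inner_zero_right] at h
    exact norm_eq_zero.1 (sq_nonpos_iff _ |>.1 (nonpos_of_mul_nonpos_right h hc))
  have hΦ : Surjective (ContinuousLinearMap.adjoint M ∘ F) := by
    refine surjective_of_strongly_monotone (L := ‖ContinuousLinearMap.adjoint M‖ * (‖A‖ + ‖M‖))
      hc (fun y z => ?_) (fun y z => ?_)
    · simp only [comp_apply, ← map_sub, mul_assoc]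
      exact (ContinuousLinearMap.le_opNorm _ _).trans
        (by gcongr; exact norm_modelOptimality_sub_le hPlip y z)
    · simp only [comp_apply, ← map_sub, ContinuousLinearMap.adjoint_inner_left]
      exact (hcoer _).trans (inner_modelOptimality_sub_ge hPmono y z)
  intro b
  obtain ⟨y, hy⟩ := hΦ (ContinuousLinearMap.adjoint M b)
  exact ⟨y, (ContinuousLinearMap.injective_adjoint hMinj) hy⟩

end ModelOptimality

theorem stmt_11_general
    (f : E → ℝ) (hf : ContDiff ℝ 2 f)
    (g : E → E) (hg : ∀ y, HasGradientAt f (g y) y)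
    (Hess : E → Matrix (Fin n) (Fin n) ℝ)
    (hHess : ∀ y, HasFDerivAt g (CLM (Hess y)) y)
    (μ τ : ℝ) (hτ0 : 0 < τ)
    (xstar : E) (hpd : (Hess xstar).PosDef)
    (hτ : τ < 1 / ‖CLM (Hess xstar)‖)
    (Fq : E → E → E)
    (hFq : ∀ x y i, Fq x y i =
      g x i + CLM (Hess x) (y - x) i -
        max (-μ) (min μ (g x i + CLM (Hess x) (y - x) i - y i / τ))) :
    ∃ N ∈ nhds xstar, ∃ lam : ℝ, 0 < lam ∧
      ∀ x ∈ N,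
        Function.Bijective (Fq x) ∧ Continuous (Fq x) ∧
        ∀ y z : E, ‖z - y‖ ≤ (2 / lam) * ‖Fq x z - Fq x y‖ := by
  have hAcont : Continuous fun x => CLM (Hess x) := continuous_hessian hf hg hHess
  have hτA : ‖CLM (Hess xstar)‖ < τ⁻¹ := by
    rcases (norm_nonneg (CLM (Hess xstar))).eq_or_lt with h | h
    · rw [← h]; positivity
    · rwa [lt_inv_comm₀ h hτ0, ← one_div]
  obtain ⟨c, hc, hcoer⟩ := eventually_forall_mul_norm_sq_le_inner_smul_sub hAcont
    hpd.isPositive_toEuclideanCLM (fun v hv => hpd.inner_toEuclideanCLM_self_pos hv) hτA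
  have hbdd : ∀ᶠ x in 𝓝 xstar, ‖CLM (Hess x)‖ < ‖CLM (Hess xstar)‖ + 1 :=
    hAcont.norm.continuousAt.eventually_lt continuousAt_const (lt_add_one _)
  set B := τ⁻¹ + (‖CLM (Hess xstar)‖ + 1)
  refine ⟨_, hcoer.and hbdd, 2 * c / B, by positivity, ?_⟩
  rintro x ⟨hxc, hxB⟩
  have hF : Fq x = modelOptimality (clampVec μ) (CLM (Hess x)) τ (g x) x := by
    funext y; ext i; rw [hFq]; simp [modelOptimality, clampVec, div_eq_inv_mul]
  have hM : ‖τ⁻¹ • 1 - CLM (Hess x)‖ ≤ B := by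
    refine (norm_sub_le _ _).trans (add_le_add ?_ hxB.le)
    rw [norm_smul, Real.norm_of_nonneg (inv_nonneg.2 hτ0.le)]
    exact mul_le_of_le_one_right (inv_nonneg.2 hτ0.le) ContinuousLinearMap.norm_id_le
  rw [hF]
  refine ⟨⟨modelOptimality_injective hxc hc (inner_clampVec_sub_nonneg μ),
    modelOptimality_surjective hxc hc (inner_clampVec_sub_nonneg μ) (norm_clampVec_sub_le μ)⟩,
    continuous_modelOptimality (norm_clampVec_sub_le μ), fun y z => ?_⟩
  rw [show 2 / (2 * c / B) = B / c by field_simp]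
  exact (norm_sub_le_modelOptimality_sub hxc hc (inner_clampVec_sub_nonneg μ) y z).trans
    (by gcongr)

/-- near a point where the Hessian is positive definite (and
`τ < 1/‖∇²f(x*)‖`), the maps `F_q(x;·)` are homeomorphisms of `ℝⁿ` with
uniformly Lipschitz inverses (constant `2/λ`). -/
theorem stmt_11
    (f : E → ℝ) (hf : ContDiff ℝ 2 f)
    (g : E → E) (hg : ∀ y, HasGradientAt f (g y) y)
    (Hess : E → Matrix (Fin n) (Fin n) ℝ)
    (hHess : ∀ y, HasFDerivAt g (CLM (Hess y)) y)
    (μ τ : ℝ) (hμ : 0 < μ) (hτ0 : 0 < τ)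
    (xstar : E) (hpd : (Hess xstar).PosDef)
    (hτ : τ < 1 / ‖CLM (Hess xstar)‖)
    (Fq : E → E → E)
    (hFq : ∀ x y i, Fq x y i =
      g x i + CLM (Hess x) (y - x) i -
        max (-μ) (min μ (g x i + CLM (Hess x) (y - x) i - y i / τ))) :
    ∃ N ∈ nhds xstar, ∃ lam : ℝ, 0 < lam ∧
      ∀ x ∈ N,
        Function.Bijective (Fq x) ∧ Continuous (Fq x) ∧
        ∀ y z : E, ‖z - y‖ ≤ (2 / lam) * ‖Fq x z - Fq x y‖ :=
  stmt_11_general f hf g hg Hess hHess μ τ hτ0 xstar hpd hτ Fq hFq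
end

section
/- (Local convergence of the inexact successive quadratic approximation method.) Let f : ℝⁿ → ℝ be twice continuously differentiable with Hessian ∇²f Lipschitz continuous, let μ > 0, let x* satisfy F(x*) = 0 with ∇²f(x*) positive definite, and let τ > 0 satisfy τ < 1/‖∇²f(x*)‖. Consider an iteration in which x_{k+1} is computed by solving F_q(x_k; x_{k+1}) = r_k (with H = ∇²f(x_k)), where ‖r_k‖ ≤ η_k‖F(x_k)‖ and η_k ∈ [0,1). Then there exist a neighborhood N of x* and η̄ > 0 such that if η_k ≤ η̄ for all k and x₀ ∈ N, the sequence {x_k} converges Q-linearly to x*; if in addition η_k → 0, the convergence is Q-superlinear; and if there is η̃ > 0 with η_k ≤ η̃‖F(x_k)‖ for all k, the convergence is Q-quadratic. -/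
/-!
With `R(v, x) = v - P (v - x / τ)` (`proxResidual`) we have `F x = R(g x, x)` and
`F_q(x; y) = R(g x + H x (y - x), y)`, where `P` is the componentwise clip onto `[-μ, μ]`,
a firmly nonexpansive map. Firm nonexpansiveness and `τ ‖H‖ ≤ 1` make `y ↦ F_q(x; y)` strongly
monotone with `3/4` of the coercivity constant of `H = ∇²f(x)`, and near `x*` that constant is
at least half the one of `∇²f(x*)`. Since `F_q(x; x*) = O(‖x - x*‖²)` by the Lipschitz Hessian
and `F x = O(‖x - x*‖)`, one step of the method gives
`γ ‖x_{k+1} - x*‖ ≤ (K η_k + C ‖x_k - x*‖) ‖x_k - x*‖`, from which all three rates follow.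
-/

open scoped RealInnerProductSpace
variable {n : ℕ}
local notation "E" => EuclideanSpace ℝ (Fin n)
local notation "CLM" => Matrix.toEuclideanCLM (𝕜 := ℝ)

open Filter Topology Metric

theorem norm_sub_sub_fderiv_le {V W : Type*} [NormedAddCommGroup V] [NormedSpace ℝ V]
    [NormedAddCommGroup W] [NormedSpace ℝ W]
    {g : V → W} {g' : V → V →L[ℝ] W} (hg : ∀ y, HasFDerivAt g (g' y) y) {L : ℝ}
    (hL : ∀ a b, ‖g' a - g' b‖ ≤ L * ‖a - b‖) (x y : V) :
    ‖g y - g x - g' x (y - x)‖ ≤ L * ‖y - x‖ ^ 2 := by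
  rcases lt_or_ge L 0 with hL0 | hL0
  · obtain rfl : y = x := by
      have := hL y x
      rw [← norm_sub_eq_zero_iff]
      nlinarith [norm_nonneg (g' y - g' x), norm_nonneg (y - x)]
    simp
  have hder : ∀ z ∈ closedBall x ‖y - x‖,
      HasFDerivWithinAt (fun z => g z - g' x z) (g' z - g' x) (closedBall x ‖y - x‖) z :=
    fun z _ => ((hg z).sub (g' x).hasFDerivAt).hasFDerivWithinAt
  have hbound : ∀ z ∈ closedBall x ‖y - x‖, ‖g' z - g' x‖ ≤ L * ‖y - x‖ := fun z hz =>
    (hL z x).trans (mul_le_mul_of_nonneg_left (mem_closedBall_iff_norm.1 hz) hL0)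
  have := (convex_closedBall x ‖y - x‖).norm_image_sub_le_of_norm_hasFDerivWithin_le hder hbound
    (mem_closedBall_self (norm_nonneg _)) (mem_closedBall_iff_norm.2 le_rfl)
  calc _ = ‖g y - g' x y - (g x - g' x x)‖ := by rw [map_sub]; congr 1; abel
    _ ≤ _ := this
    _ = _ := by ring

section InnerProductSpace

variable {V : Type*} [NormedAddCommGroup V] [InnerProductSpace ℝ V]

def FirmlyNonexpansive (P : V → V) : Prop :=
  ∀ u v, ‖P u - P v‖ ^ 2 ≤ ⟪P u - P v, u - v⟫

noncomputable def proxResidual (P : V → V) (τ : ℝ) (v x : V) : V := v - P (v - τ⁻¹ • x)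

theorem FirmlyNonexpansive.norm_sub_le {P : V → V} (hP : FirmlyNonexpansive P) (u v : V) :
    ‖P u - P v‖ ≤ ‖u - v‖ := by
  nlinarith [hP u v, real_inner_le_norm (P u - P v) (u - v), norm_nonneg (P u - P v),
    norm_nonneg (u - v)]

theorem FirmlyNonexpansive.norm_proxResidual_sub_le {P : V → V} (hP : FirmlyNonexpansive P)
    (τ : ℝ) (v v' x x' : V) :
    ‖proxResidual P τ v x - proxResidual P τ v' x'‖ ≤ 2 * ‖v - v'‖ + |τ⁻¹| * ‖x - x'‖ := by
  have hsplit : proxResidual P τ v x - proxResidual P τ v' x' =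
      (v - v') - (P (v - τ⁻¹ • x) - P (v' - τ⁻¹ • x')) := by
    simp only [proxResidual]; abel
  have harg : (v - τ⁻¹ • x) - (v' - τ⁻¹ • x') = (v - v') - τ⁻¹ • (x - x') := by
    rw [smul_sub]; abel
  rw [hsplit]
  calc _ ≤ ‖v - v'‖ + ‖P (v - τ⁻¹ • x) - P (v' - τ⁻¹ • x')‖ := _root_.norm_sub_le _ _
    _ ≤ ‖v - v'‖ + (‖v - v'‖ + ‖τ⁻¹ • (x - x')‖) := by
        gcongr
        exact (hP.norm_sub_le _ _).trans (harg ▸ _root_.norm_sub_le _ _)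
    _ = _ := by rw [norm_smul, Real.norm_eq_abs]; ring

theorem ContinuousLinearMap.IsPositive.inner_sq_le {T : V →L[ℝ] V} (hT : T.IsPositive)
    (u v : V) : ⟪T u, v⟫ ^ 2 ≤ ⟪T u, u⟫ * ⟪T v, v⟫ := by
  have hquad : ∀ t : ℝ, 0 ≤ ⟪T v, v⟫ * (t * t) + 2 * ⟪T u, v⟫ * t + ⟪T u, u⟫ := by
    intro t
    have hsymm : ⟪T v, u⟫ = ⟪T u, v⟫ := by
      rw [hT.isSymmetric.apply_clm, real_inner_comm]
    have := hT.inner_nonneg_left (u + t • v)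
    simp only [map_add, map_smul, inner_add_left, inner_add_right, real_inner_smul_left,
      real_inner_smul_right, hsymm] at this
    linarith
  have := discrim_le_zero hquad
  rw [discrim] at this
  linarith

theorem ContinuousLinearMap.IsPositive.norm_apply_sq_le {T : V →L[ℝ] V} (hT : T.IsPositive)
    (d : V) : ‖T d‖ ^ 2 ≤ ‖T‖ * ⟪T d, d⟫ := by
  have hCS := hT.inner_sq_le d (T d)
  have hTT : ⟪T (T d), T d⟫ ≤ ‖T‖ * ‖T d‖ ^ 2 := by
    calc ⟪T (T d), T d⟫ ≤ ‖T (T d)‖ * ‖T d‖ := real_inner_le_norm _ _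
      _ ≤ ‖T‖ * ‖T d‖ * ‖T d‖ := by gcongr; exact T.le_opNorm _
      _ = ‖T‖ * ‖T d‖ ^ 2 := by ring
  rw [real_inner_comm, real_inner_self_eq_norm_sq] at hCS
  rcases (norm_nonneg (T d)).eq_or_lt with h | h
  · rw [← h, zero_pow two_ne_zero]
    exact mul_nonneg (norm_nonneg T) (hT.inner_nonneg_left d)
  · nlinarith [hT.inner_nonneg_left d, pow_pos h 2]

theorem FirmlyNonexpansive.inner_le_inner_proxResidual_model_sub {P : V → V}
    (hP : FirmlyNonexpansive P) {τ : ℝ} (hτ : 0 < τ) {H : V →L[ℝ] V} (hH : H.IsPositive)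
    (hτH : τ * ‖H‖ ≤ 1) (v x y y' : V) :
    3 / 4 * ⟪H (y - y'), y - y'⟫ ≤
      ⟪proxResidual P τ (v + H (y - x)) y - proxResidual P τ (v + H (y' - x)) y', y - y'⟫ := by
  set d := y - y'
  set c := P (v + H (y - x) - τ⁻¹ • y) - P (v + H (y' - x) - τ⁻¹ • y')
  have hdiff : proxResidual P τ (v + H (y - x)) y - proxResidual P τ (v + H (y' - x)) y' =
      H d - c := by
    simp only [proxResidual, d, c, map_sub]; abel
  have hfirm : ‖c‖ ^ 2 ≤ ⟪c, H d⟫ - τ⁻¹ * ⟪c, d⟫ := by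
    have harg : (v + H (y - x) - τ⁻¹ • y) - (v + H (y' - x) - τ⁻¹ • y') = H d - τ⁻¹ • d := by
      simp only [d, map_sub, smul_sub]; abel
    have := hP (v + H (y - x) - τ⁻¹ • y) (v + H (y' - x) - τ⁻¹ • y')
    rwa [harg, inner_sub_right, real_inner_smul_right] at this
  have hHd : τ * ‖H d‖ ^ 2 ≤ ⟪H d, d⟫ := by
    have := hH.norm_apply_sq_le d
    nlinarith [hH.inner_nonneg_left d]
  -- `‖c‖ ‖H d‖ - ‖c‖² ≤ ‖H d‖² / 4`, so the projection eats at most a quarter of `⟪H d, d⟫`.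
  have hcd : ⟪c, d⟫ ≤ ⟪H d, d⟫ / 4 := by
    have hτc : ⟪c, d⟫ ≤ τ * (⟪c, H d⟫ - ‖c‖ ^ 2) := by
      have := mul_le_mul_of_nonneg_left hfirm hτ.le
      rw [mul_sub, ← mul_assoc, mul_inv_cancel₀ hτ.ne', one_mul] at this
      linarith
    nlinarith [real_inner_le_norm c (H d), sq_nonneg (‖c‖ - ‖H d‖ / 2)]
  rw [hdiff, inner_sub_left]
  linarith

theorem FirmlyNonexpansive.mul_norm_sub_le_norm_proxResidual_model_sub {P : V → V}
    (hP : FirmlyNonexpansive P) {τ : ℝ} (hτ : 0 < τ) {H : V →L[ℝ] V} (hH : H.IsPositive)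
    (hτH : τ * ‖H‖ ≤ 1) {lam : ℝ} (hco : ∀ d, lam * ‖d‖ ^ 2 ≤ ⟪H d, d⟫) (v x y y' : V) :
    3 / 4 * lam * ‖y - y'‖ ≤
      ‖proxResidual P τ (v + H (y - x)) y - proxResidual P τ (v + H (y' - x)) y'‖ := by
  rcases (norm_nonneg (y - y')).eq_or_lt with h | h
  · rw [← h, mul_zero]; exact norm_nonneg _
  refine le_of_mul_le_mul_right ?_ h
  calc 3 / 4 * lam * ‖y - y'‖ * ‖y - y'‖ ≤ 3 / 4 * ⟪H (y - y'), y - y'⟫ := by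
        nlinarith [hco (y - y')]
    _ ≤ _ := hP.inner_le_inner_proxResidual_model_sub hτ hH hτH v x y y'
    _ ≤ _ := real_inner_le_norm _ _

theorem sub_mul_sq_le_inner_of_norm_sub_le {A B : V →L[ℝ] V} {lam ε : ℝ}
    (hA : ∀ d, lam * ‖d‖ ^ 2 ≤ ⟪A d, d⟫) (hAB : ‖B - A‖ ≤ ε) (d : V) :
    (lam - ε) * ‖d‖ ^ 2 ≤ ⟪B d, d⟫ := by
  have h1 : -(ε * ‖d‖ ^ 2) ≤ ⟪(B - A) d, d⟫ := by
    have := (B - A).le_opNorm d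
    nlinarith [neg_le_of_abs_le (abs_real_inner_le_norm ((B - A) d) d), norm_nonneg d]
  rw [sub_apply, inner_sub_left] at h1
  nlinarith [hA d]

theorem exists_pos_mul_sq_le_inner [FiniteDimensional ℝ V] {T : V →L[ℝ] V}
    (hT : ∀ d ≠ 0, 0 < ⟪T d, d⟫) : ∃ lam > 0, ∀ d, lam * ‖d‖ ^ 2 ≤ ⟪T d, d⟫ := by
  obtain ⟨lam, hlam, hmin⟩ := (isCompact_sphere (0 : V) 1).exists_forall_le'
    (by fun_prop : Continuous fun u => ⟪T u, u⟫).continuousOn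
    (fun u hu => hT u (ne_zero_of_mem_unit_sphere ⟨u, hu⟩))
  refine ⟨lam, hlam, fun d => ?_⟩
  rcases eq_or_ne d 0 with rfl | hd
  · simp
  have hd' : 0 < ‖d‖ := norm_pos_iff.2 hd
  have := hmin (‖d‖⁻¹ • d) (by simp [norm_smul, hd'.ne'])
  rw [map_smul, real_inner_smul_left, real_inner_smul_right, ← mul_assoc, ← sq, inv_pow,
    le_inv_mul_iff₀ (by positivity)] at this
  linarith

theorem isSymmetric_of_hasGradientAt [CompleteSpace V] {f : V → ℝ} {g : V → V}
    (hg : ∀ y, HasGradientAt f (g y) y) {H : V →L[ℝ] V} {x : V} (hH : HasFDerivAt g H x) :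
    (H : V →ₗ[ℝ] V).IsSymmetric := by
  intro u v
  have hd : HasFDerivAt (fun y => InnerProductSpace.toDual ℝ V (g y))
      ((InnerProductSpace.toDual ℝ V).toContinuousLinearEquiv.toContinuousLinearMap.comp H) x :=
    (InnerProductSpace.toDual ℝ V).toContinuousLinearEquiv.hasFDerivAt.comp x hH
  have := second_derivative_symmetric (fun y => (hg y).hasFDerivAt) hd u v
  simpa [real_inner_comm] using this

theorem FirmlyNonexpansive.isBigO_proxResidual {P : V → V} (hP : FirmlyNonexpansive P)
    {τ : ℝ} {g : V → V} {g' : V →L[ℝ] V} {xstar : V} (hg : HasFDerivAt g g' xstar)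
    (hstar : proxResidual P τ (g xstar) xstar = 0) :
    (fun x => proxResidual P τ (g x) x) =O[𝓝 xstar] (· - xstar) := by
  have hbound : ∀ x, ‖proxResidual P τ (g x) x‖ ≤
      ‖2 * ‖g x - g xstar‖ + |τ⁻¹| * ‖x - xstar‖‖ := fun x => by
    simpa [hstar, Real.norm_eq_abs] using
      (hP.norm_proxResidual_sub_le τ (g x) (g xstar) x xstar).trans (le_abs_self _)
  exact (Asymptotics.isBigO_of_le _ hbound).trans
    ((hg.isBigO_sub.norm_left.const_mul_left 2).add
      ((Asymptotics.isBigO_refl _ _).norm_left.const_mul_left _))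

theorem FirmlyNonexpansive.norm_proxResidual_model_le {P : V → V} (hP : FirmlyNonexpansive P)
    {τ : ℝ} {g : V → V} {H : V → V →L[ℝ] V} (hg : ∀ y, HasFDerivAt g (H y) y) {L : ℝ}
    (hL : ∀ a b, ‖H a - H b‖ ≤ L * ‖a - b‖) {xstar : V}
    (hstar : proxResidual P τ (g xstar) xstar = 0) (x : V) :
    ‖proxResidual P τ (g x + H x (xstar - x)) xstar‖ ≤ 2 * L * ‖x - xstar‖ ^ 2 := by
  have h := hP.norm_proxResidual_sub_le τ (g x + H x (xstar - x)) (g xstar) xstar xstar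
  rw [hstar, sub_zero, sub_self, norm_zero, mul_zero, add_zero] at h
  calc _ ≤ 2 * ‖g x + H x (xstar - x) - g xstar‖ := h
    _ = 2 * ‖g xstar - g x - H x (xstar - x)‖ := by rw [← norm_neg]; congr 2; abel
    _ ≤ 2 * (L * ‖xstar - x‖ ^ 2) := by gcongr; exact norm_sub_sub_fderiv_le hg hL x xstar
    _ = _ := by rw [norm_sub_rev]; ring

theorem FirmlyNonexpansive.eventually_mul_norm_sub_le_norm_proxResidual_model {P : V → V}
    (hP : FirmlyNonexpansive P) {τ : ℝ} (hτ : 0 < τ) {g : V → V} {H : V → V →L[ℝ] V}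
    (hg : ∀ y, HasFDerivAt g (H y) y)
    (hsymm : ∀ x, (H x : V →ₗ[ℝ] V).IsSymmetric) {L : ℝ}
    (hL : ∀ a b, ‖H a - H b‖ ≤ L * ‖a - b‖) {xstar : V}
    (hstar : proxResidual P τ (g xstar) xstar = 0) {lam : ℝ} (hlam : 0 < lam)
    (hco : ∀ d, lam * ‖d‖ ^ 2 ≤ ⟪H xstar d, d⟫) (hτH : ‖H xstar‖ < τ⁻¹) :
    ∀ᶠ x in 𝓝 xstar, ∀ y, 3 / 8 * lam * ‖y - xstar‖ ≤
      ‖proxResidual P τ (g x + H x (y - x)) y‖ + 2 * L * ‖x - xstar‖ ^ 2 := by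
  have hHcont : Tendsto H (𝓝 xstar) (𝓝 (H xstar)) :=
    tendsto_iff_norm_sub_tendsto_zero.2 <| squeeze_zero (fun _ => norm_nonneg _)
      (fun x => hL x xstar) (by simpa using (tendsto_norm_sub_self xstar).const_mul L)
  filter_upwards [hHcont.eventually (closedBall_mem_nhds _ (half_pos hlam)),
    hHcont.norm.eventually (gt_mem_nhds hτH)] with x hx hxτ y
  have hco' : ∀ d, lam / 2 * ‖d‖ ^ 2 ≤ ⟪H x d, d⟫ := fun d => by
    have := sub_mul_sq_le_inner_of_norm_sub_le hco (mem_closedBall_iff_norm.1 hx) d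
    rwa [sub_half] at this
  have hpos : (H x).IsPositive :=
    (ContinuousLinearMap.isPositive_iff _).2 ⟨hsymm x, fun d => le_trans (by positivity) (hco' d)⟩
  have hτx : τ * ‖H x‖ ≤ 1 := by
    calc τ * ‖H x‖ ≤ τ * τ⁻¹ := by gcongr
      _ = 1 := mul_inv_cancel₀ hτ.ne'
  calc 3 / 8 * lam * ‖y - xstar‖ = 3 / 4 * (lam / 2) * ‖y - xstar‖ := by ring
    _ ≤ ‖proxResidual P τ (g x + H x (y - x)) y -
          proxResidual P τ (g x + H x (xstar - x)) xstar‖ :=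
      hP.mul_norm_sub_le_norm_proxResidual_model_sub hτ hpos hτx hco' (g x) x y xstar
    _ ≤ _ := norm_sub_le_of_le le_rfl (hP.norm_proxResidual_model_le hg hL hstar x)

end InnerProductSpace

noncomputable def clip (μ t : ℝ) : ℝ := max (-μ) (min μ t)

theorem firmlyNonexpansive_clip (μ : ℝ) : FirmlyNonexpansive (clip μ) := by
  intro a b
  simp only [clip, RCLike.inner_apply, conj_trivial, Real.norm_eq_abs, sq_abs, max_def, min_def]
  split_ifs <;> nlinarith

theorem FirmlyNonexpansive.euclideanSpace_map {ι : Type*} [Fintype ι] {φ : ℝ → ℝ}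
    (hφ : FirmlyNonexpansive φ) :
    FirmlyNonexpansive fun u : EuclideanSpace ℝ ι => WithLp.toLp 2 fun i => φ (u i) := by
  intro u v
  rw [← real_inner_self_eq_norm_sq]
  simp only [PiLp.inner_apply, PiLp.sub_apply]
  exact Finset.sum_le_sum fun i _ => by simpa [sq] using hφ (u i) (v i)

theorem Matrix.PosDef.inner_toEuclideanCLM_self_pos_s14 {ι : Type*} [Fintype ι] [DecidableEq ι]
    {A : Matrix ι ι ℝ} (hA : A.PosDef) {d : EuclideanSpace ℝ ι} (hd : d ≠ 0) :
    0 < ⟪Matrix.toEuclideanCLM (𝕜 := ℝ) A d, d⟫ := by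
  rw [EuclideanSpace.inner_eq_star_dotProduct]
  simpa [dotProduct_comm] using hA.dotProduct_mulVec_pos (x := WithLp.ofLp d) (by simpa using hd)

section ErrorRecursion

variable {e : ℕ → ℝ}

theorem forall_le_and_le_half {δ : ℝ} (he : ∀ k, 0 ≤ e k) (h0 : e 0 ≤ δ)
    (hstep : ∀ k, e k ≤ δ → e (k + 1) ≤ e k / 2) : ∀ k, e k ≤ δ ∧ e (k + 1) ≤ e k / 2 := by
  intro k
  induction k with
  | zero => exact ⟨h0, hstep 0 h0⟩
  | succ k ih =>
    have hk : e (k + 1) ≤ δ := by linarith [he k, ih.1, ih.2]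
    exact ⟨hk, hstep _ hk⟩

theorem tendsto_zero_of_le_half (he : ∀ k, 0 ≤ e k) (h : ∀ k, e (k + 1) ≤ e k / 2) :
    Tendsto e atTop (𝓝 0) := by
  have hgeom : ∀ k, e k ≤ e 0 * (1 / 2) ^ k := by
    intro k
    induction k with
    | zero => simp
    | succ k ih => rw [pow_succ]; linarith [h k]
  refine squeeze_zero he hgeom ?_
  simpa using (tendsto_pow_atTop_nhds_zero_of_lt_one (by norm_num : (0 : ℝ) ≤ 1 / 2)
    (by norm_num)).const_mul (e 0)

theorem tendsto_div_of_le_mul {s : ℕ → ℝ} (he : ∀ k, 0 ≤ e k) (h : ∀ k, e (k + 1) ≤ s k * e k)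
    (hs : Tendsto s atTop (𝓝 0)) : Tendsto (fun k => e (k + 1) / e k) atTop (𝓝 0) := by
  refine squeeze_zero (fun k => div_nonneg (he _) (he k)) (g := fun k => max (s k) 0)
    (fun k => ?_) (by simpa using hs.max (tendsto_const_nhds (x := (0 : ℝ))))
  rcases (he k).eq_or_lt with h0 | hpos
  · simp [← h0] -- the quotient is `x / 0 = 0`
  · exact (div_le_iff₀ hpos).2 <|
      (h k).trans (mul_le_mul_of_nonneg_right (le_max_left _ _) (he k))

end ErrorRecursion

theorem exists_nhds_inexact_convergence {V : Type*} [NormedAddCommGroup V]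
    {Φ : V → V} {R : V → V → V} {xstar : V} {γ C : ℝ} (hγ : 0 < γ)
    (hΦ : Φ =O[𝓝 xstar] (· - xstar))
    (hR : ∀ᶠ x in 𝓝 xstar, ∀ y, γ * ‖y - xstar‖ ≤ ‖R x y‖ + C * ‖x - xstar‖ ^ 2) :
    ∃ N ∈ 𝓝 xstar, ∃ ηbar : ℝ, 0 < ηbar ∧
      ∀ (xs : ℕ → V) (r : ℕ → V) (η : ℕ → ℝ),
        (∀ k, 0 ≤ η k) →
        (∀ k, R (xs k) (xs (k + 1)) = r k) →
        (∀ k, ‖r k‖ ≤ η k * ‖Φ (xs k)‖) →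
        xs 0 ∈ N →
        ((∀ k, η k ≤ ηbar) →
          (Tendsto xs atTop (𝓝 xstar) ∧
           ∃ c : ℝ, 0 < c ∧ c < 1 ∧
             ∀ᶠ k in atTop, ‖xs (k + 1) - xstar‖ ≤ c * ‖xs k - xstar‖)) ∧
        ((∀ k, η k ≤ ηbar) → Tendsto η atTop (𝓝 0) →
          (Tendsto xs atTop (𝓝 xstar) ∧
           Tendsto (fun k => ‖xs (k + 1) - xstar‖ / ‖xs k - xstar‖) atTop (𝓝 0))) ∧
        ((∀ k, η k ≤ ηbar) →
          ∀ ηtil : ℝ, 0 < ηtil → (∀ k, η k ≤ ηtil * ‖Φ (xs k)‖) →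
          (Tendsto xs atTop (𝓝 xstar) ∧
           ∃ C : ℝ, ∀ᶠ k in atTop, ‖xs (k + 1) - xstar‖ ≤ C * ‖xs k - xstar‖ ^ 2)) := by
  obtain ⟨K, hK, hΦK⟩ := hΦ.exists_pos
  have hC : ∀ᶠ x in 𝓝 xstar, C * ‖x - xstar‖ ≤ γ / 4 :=
    ((tendsto_norm_sub_self xstar).const_mul C).eventually
      (ge_mem_nhds (by rw [mul_zero]; positivity))
  obtain ⟨δ, hδ, hgood⟩ := nhds_basis_closedBall.eventually_iff.1 (hR.and (hΦK.bound.and hC))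
  refine ⟨closedBall xstar δ, closedBall_mem_nhds _ hδ, γ / (4 * K), by positivity, ?_⟩
  intro xs r η hη0 hRr hr hx0
  set e : ℕ → ℝ := fun k => ‖xs k - xstar‖
  have he : ∀ k, 0 ≤ e k := fun k => norm_nonneg _
  have hΦe : ∀ k, e k ≤ δ → ‖Φ (xs k)‖ ≤ K * e k := fun k hk =>
    (hgood (mem_closedBall_iff_norm.2 hk)).2.1
  have hstep : ∀ k, e k ≤ δ → γ * e (k + 1) ≤ (K * η k + C * e k) * e k := fun k hk => by
    calc γ * e (k + 1) ≤ ‖r k‖ + C * e k ^ 2 :=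
          hRr k ▸ (hgood (mem_closedBall_iff_norm.2 hk)).1 (xs (k + 1))
      _ ≤ η k * (K * e k) + C * e k ^ 2 := by
          gcongr; exact (hr k).trans (mul_le_mul_of_nonneg_left (hΦe k hk) (hη0 k))
      _ = _ := by ring
  -- With `K η_k ≤ γ / 4` and `C ‖x_k - x*‖ ≤ γ / 4`, each step halves the error.
  have hhalf (hbar : ∀ k, η k ≤ γ / (4 * K)) : ∀ k, e k ≤ δ ∧ e (k + 1) ≤ e k / 2 := by
    refine forall_le_and_le_half he (mem_closedBall_iff_norm.1 hx0) fun k hk => ?_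
    have hCk := (hgood (mem_closedBall_iff_norm.2 hk)).2.2
    have hKη : K * η k ≤ γ / 4 := by
      have := (le_div_iff₀ (by positivity)).1 (hbar k); linarith
    nlinarith [hstep k hk, he k]
  have hlim (hbar : ∀ k, η k ≤ γ / (4 * K)) : Tendsto e atTop (𝓝 0) :=
    tendsto_zero_of_le_half he fun k => (hhalf hbar k).2
  have hxs (hbar : ∀ k, η k ≤ γ / (4 * K)) : Tendsto xs atTop (𝓝 xstar) :=
    tendsto_iff_norm_sub_tendsto_zero.2 (hlim hbar)
  refine ⟨fun hbar => ⟨hxs hbar, 1 / 2, by norm_num, by norm_num, .of_forall fun k => ?_⟩,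
    fun hbar hη => ⟨hxs hbar, ?_⟩, fun hbar ηtil hηtil hηF => ⟨hxs hbar, ?_⟩⟩
  · linarith [(hhalf hbar k).2]
  · refine tendsto_div_of_le_mul he (s := fun k => (K * η k + C * e k) / γ) (fun k => ?_) ?_
    · rw [div_mul_eq_mul_div, le_div_iff₀ hγ, mul_comm]; exact hstep k (hhalf hbar k).1
    · simpa using ((hη.const_mul K).add ((hlim hbar).const_mul C)).div_const γ
  · refine ⟨(K * ηtil * K + C) / γ, .of_forall fun k => ?_⟩
    have hk := (hhalf hbar k).1
    have hηk : η k ≤ ηtil * (K * e k) :=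
      (hηF k).trans (mul_le_mul_of_nonneg_left (hΦe k hk) hηtil.le)
    show e (k + 1) ≤ _ * e k ^ 2
    rw [div_mul_eq_mul_div, le_div_iff₀ hγ]
    nlinarith [hstep k hk, mul_le_mul_of_nonneg_left hηk (mul_nonneg hK.le (he k))]

theorem stmt_14_general
    (f : E → ℝ)
    (g : E → E) (hg : ∀ y, HasGradientAt f (g y) y)
    (Hess : E → Matrix (Fin n) (Fin n) ℝ)
    (hHess : ∀ y, HasFDerivAt g (CLM (Hess y)) y)
    (L : ℝ) (hL : ∀ a b : E, ‖CLM (Hess a) - CLM (Hess b)‖ ≤ L * ‖a - b‖)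
    (μ τ : ℝ) (hτ0 : 0 < τ)
    (F : E → E)
    (hF : ∀ y i, F y i = g y i - max (-μ) (min μ (g y i - y i / τ)))
    (xstar : E) (hstar : F xstar = 0)
    (hpd : (Hess xstar).PosDef)
    (hτ : τ < 1 / ‖CLM (Hess xstar)‖)
    (Fq : E → E → E)
    (hFq : ∀ x y i, Fq x y i =
      g x i + CLM (Hess x) (y - x) i -
        max (-μ) (min μ (g x i + CLM (Hess x) (y - x) i - y i / τ))) :
    ∃ N ∈ nhds xstar, ∃ ηbar : ℝ, 0 < ηbar ∧
      ∀ (xs : ℕ → E) (r : ℕ → E) (η : ℕ → ℝ),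
        (∀ k, 0 ≤ η k) → (∀ k, η k < 1) →
        (∀ k, Fq (xs k) (xs (k + 1)) = r k) →
        (∀ k, ‖r k‖ ≤ η k * ‖F (xs k)‖) →
        xs 0 ∈ N →
        ((∀ k, η k ≤ ηbar) →
          (Filter.Tendsto xs Filter.atTop (nhds xstar) ∧
           ∃ c : ℝ, 0 < c ∧ c < 1 ∧
             ∀ᶠ k in Filter.atTop, ‖xs (k + 1) - xstar‖ ≤ c * ‖xs k - xstar‖)) ∧
        ((∀ k, η k ≤ ηbar) → Filter.Tendsto η Filter.atTop (nhds 0) →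
          (Filter.Tendsto xs Filter.atTop (nhds xstar) ∧
           Filter.Tendsto (fun k => ‖xs (k + 1) - xstar‖ / ‖xs k - xstar‖)
             Filter.atTop (nhds 0))) ∧
        ((∀ k, η k ≤ ηbar) →
          ∀ ηtil : ℝ, 0 < ηtil → (∀ k, η k ≤ ηtil * ‖F (xs k)‖) →
          (Filter.Tendsto xs Filter.atTop (nhds xstar) ∧
           ∃ C : ℝ, ∀ᶠ k in Filter.atTop,
             ‖xs (k + 1) - xstar‖ ≤ C * ‖xs k - xstar‖ ^ 2)) := by
  set P : E → E := fun u => WithLp.toLp 2 fun i => clip μ (u i)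
  have hP : FirmlyNonexpansive P := (firmlyNonexpansive_clip μ).euclideanSpace_map
  obtain rfl : F = fun y => proxResidual P τ (g y) y := by
    ext y i; simp [hF, proxResidual, P, clip, div_eq_inv_mul]
  obtain rfl : Fq = fun x y => proxResidual P τ (g x + CLM (Hess x) (y - x)) y := by
    ext x y i; simp [hFq, proxResidual, P, clip, div_eq_inv_mul]
  obtain ⟨lam, hlam, hco⟩ :=
    exists_pos_mul_sq_le_inner fun d hd => hpd.inner_toEuclideanCLM_self_pos_s14 hd
  have hτH : ‖CLM (Hess xstar)‖ < τ⁻¹ := by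
    rcases (norm_nonneg (CLM (Hess xstar))).eq_or_lt with h | h
    · rw [← h]; positivity
    · simpa using (lt_one_div hτ0 h).1 hτ
  obtain ⟨N, hN, ηbar, hηbar, hconv⟩ := exists_nhds_inexact_convergence
    (by positivity : 0 < 3 / 8 * lam) (hP.isBigO_proxResidual (hHess xstar) hstar)
    (hP.eventually_mul_norm_sub_le_norm_proxResidual_model hτ0 hHess
      (fun x => isSymmetric_of_hasGradientAt hg (hHess x)) hL hstar hlam hco hτH)
  exact ⟨N, hN, ηbar, hηbar, fun xs r η hη0 _ => hconv xs r η hη0⟩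

/-- local convergence of the inexact successive quadratic
approximation method: Q-linear for `η_k ≤ η̄`, Q-superlinear if `η_k → 0`,
and Q-quadratic if `η_k ≤ η̃‖F(x_k)‖`. -/
theorem stmt_14
    (f : E → ℝ) (hf : ContDiff ℝ 2 f)
    (g : E → E) (hg : ∀ y, HasGradientAt f (g y) y)
    (Hess : E → Matrix (Fin n) (Fin n) ℝ)
    (hHess : ∀ y, HasFDerivAt g (CLM (Hess y)) y)
    (L : ℝ) (hL : ∀ a b : E, ‖CLM (Hess a) - CLM (Hess b)‖ ≤ L * ‖a - b‖)
    (μ τ : ℝ) (hμ : 0 < μ) (hτ0 : 0 < τ)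
    (F : E → E)
    (hF : ∀ y i, F y i = g y i - max (-μ) (min μ (g y i - y i / τ)))
    (xstar : E) (hstar : F xstar = 0)
    (hpd : (Hess xstar).PosDef)
    (hτ : τ < 1 / ‖CLM (Hess xstar)‖)
    (Fq : E → E → E)
    (hFq : ∀ x y i, Fq x y i =
      g x i + CLM (Hess x) (y - x) i -
        max (-μ) (min μ (g x i + CLM (Hess x) (y - x) i - y i / τ))) :
    ∃ N ∈ nhds xstar, ∃ ηbar : ℝ, 0 < ηbar ∧
      ∀ (xs : ℕ → E) (r : ℕ → E) (η : ℕ → ℝ),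
        (∀ k, 0 ≤ η k) → (∀ k, η k < 1) →
        (∀ k, Fq (xs k) (xs (k + 1)) = r k) →
        (∀ k, ‖r k‖ ≤ η k * ‖F (xs k)‖) →
        xs 0 ∈ N →
        ((∀ k, η k ≤ ηbar) →
          (Filter.Tendsto xs Filter.atTop (nhds xstar) ∧
           ∃ c : ℝ, 0 < c ∧ c < 1 ∧
             ∀ᶠ k in Filter.atTop, ‖xs (k + 1) - xstar‖ ≤ c * ‖xs k - xstar‖)) ∧
        ((∀ k, η k ≤ ηbar) → Filter.Tendsto η Filter.atTop (nhds 0) →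
          (Filter.Tendsto xs Filter.atTop (nhds xstar) ∧
           Filter.Tendsto (fun k => ‖xs (k + 1) - xstar‖ / ‖xs k - xstar‖)
             Filter.atTop (nhds 0))) ∧
        ((∀ k, η k ≤ ηbar) →
          ∀ ηtil : ℝ, 0 < ηtil → (∀ k, η k ≤ ηtil * ‖F (xs k)‖) →
          (Filter.Tendsto xs Filter.atTop (nhds xstar) ∧
           ∃ C : ℝ, ∀ᶠ k in Filter.atTop,
             ‖xs (k + 1) - xstar‖ ≤ C * ‖xs k - xstar‖ ^ 2)) :=
  stmt_14_general f g hg Hess hHess L hL μ τ hτ0 F hF xstar hstar hpd hτ Fq hFq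
end

section
/- Let f : ℝⁿ → ℝ be differentiable with gradient g = ∇f, let μ > 0, fix x ∈ ℝⁿ and a symmetric positive definite n×n matrix H. Define ℓ(y) = f(x) + g(x)ᵀ(y − x) + μ‖y‖₁ and q(y) = ℓ(y) + ½(y − x)ᵀH(y − x). If ȳ is a minimizer of q over ℝⁿ, then ℓ(x) ≥ ℓ(ȳ) + (ȳ − x)ᵀH(ȳ − x). -/
/-!
Write `Q v = ⟪v, H v⟫`. Moving from the minimizer `ȳ` of `q = ℓ + ½ Q(· - x)` towards `x`, to
`z = t x + (1 - t) ȳ`, the convex part `ℓ` grows by at most `t (ℓ x - ℓ ȳ)` while the quadratic part shrinks by the factor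
`(1 - t)²`. Minimality of `ȳ` therefore gives `ℓ ȳ - ℓ x + Q(ȳ - x) ≤ (t / 2) Q(ȳ - x)` for every
`t ∈ (0, 1]`, and letting `t → 0` yields the claim. Here `ℓ` is convex as an affine function plus
`μ` times the `ℓ¹` norm.
-/

open scoped RealInnerProductSpace

variable {n : ℕ}
local notation "E" => EuclideanSpace ℝ (Fin n)
local notation "CLM" => Matrix.toEuclideanCLM (𝕜 := ℝ)

open Set Filter Topology

lemma nonpos_of_forall_le_mul {c d : ℝ} (h : ∀ t ∈ Ioc (0 : ℝ) 1, c ≤ t * d) : c ≤ 0 := by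
  have hlim : Tendsto (fun t : ℝ => t * d) (𝓝[>] 0) (𝓝 0) := by
    simpa using ((continuous_mul_const d).tendsto 0).mono_left nhdsWithin_le_nhds
  refine ge_of_tendsto hlim ?_
  filter_upwards [Ioc_mem_nhdsGT (zero_lt_one' ℝ)] using h

lemma convexOn_sum_abs {ι : Type*} [Fintype ι] :
    ConvexOn ℝ univ (fun y : EuclideanSpace ℝ ι => ∑ i, |y i|) := by
  let toL1 : EuclideanSpace ℝ ι →ₗ[ℝ] PiLp 1 (fun _ : ι => ℝ) :=
    (WithLp.linearEquiv 1 ℝ (ι → ℝ)).symm.toLinearMap ∘ₗ (WithLp.linearEquiv 2 ℝ (ι → ℝ)).toLinearMap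
  have h := (convexOn_norm convex_univ).comp_linearMap toL1
  rw [preimage_univ] at h
  refine h.congr fun y _ => ?_
  simp [toL1, PiLp.norm_eq_of_L1]

section ProximalStep

variable {V : Type*} [AddCommGroup V] [Module ℝ V] {ℓ Q : V → ℝ}

lemma ConvexOn.sub_add_le_mul_of_forall_le (hℓ : ConvexOn ℝ univ ℓ)
    (hQ : ∀ (c : ℝ) v, Q (c • v) = c ^ 2 * Q v) {x y : V}
    (hmin : ∀ z, ℓ y + Q (y - x) / 2 ≤ ℓ z + Q (z - x) / 2) {t : ℝ} (ht : t ∈ Ioc (0 : ℝ) 1) :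
    ℓ y - ℓ x + Q (y - x) ≤ t * (Q (y - x) / 2) := by
  obtain ⟨ht0, ht1⟩ := ht
  have hconv : ℓ (t • x + (1 - t) • y) ≤ t * ℓ x + (1 - t) * ℓ y :=
    hℓ.2 (mem_univ x) (mem_univ y) ht0.le (by linarith) (by ring)
  have hQz : Q (t • x + (1 - t) • y - x) = (1 - t) ^ 2 * Q (y - x) := by
    rw [← hQ]
    congr 1
    module
  have hmz := hmin (t • x + (1 - t) • y)
  rw [hQz] at hmz
  have : t * (ℓ y - ℓ x + Q (y - x) - t * (Q (y - x) / 2)) ≤ 0 := by linear_combination hmz + hconv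
  exact sub_nonpos.mp (nonpos_of_mul_nonpos_right this ht0)

theorem ConvexOn.add_le_of_forall_le (hℓ : ConvexOn ℝ univ ℓ)
    (hQ : ∀ (c : ℝ) v, Q (c • v) = c ^ 2 * Q v) {x y : V}
    (hmin : ∀ z, ℓ y + Q (y - x) / 2 ≤ ℓ z + Q (z - x) / 2) :
    ℓ y + Q (y - x) ≤ ℓ x := by
  have := nonpos_of_forall_le_mul fun t ht => hℓ.sub_add_le_mul_of_forall_le hQ hmin ht
  linarith

end ProximalStep

theorem stmt_15_general
    (f : E → ℝ) (g : E → E)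
    (μ : ℝ) (hμ : 0 < μ)
    (x : E)
    (H : Matrix (Fin n) (Fin n) ℝ)
    (ℓ q : E → ℝ)
    (hℓ : ∀ y, ℓ y = f x + ⟪g x, y - x⟫ + μ * ∑ i, |y i|)
    (hq : ∀ y, q y = ℓ y + (1 / 2) * ⟪y - x, CLM H (y - x)⟫)
    (ybar : E) (hmin : ∀ z, q ybar ≤ q z) :
    ℓ x ≥ ℓ ybar + ⟪ybar - x, CLM H (ybar - x)⟫ := by
  have hconv : ConvexOn ℝ univ ℓ := by
    refine ((((innerₗ E (g x)).convexOn convex_univ).add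
      (convexOn_sum_abs.smul hμ.le)).add_const (f x - ⟪g x, x⟫)).congr fun y _ => ?_
    simp only [hℓ, inner_sub_right, Pi.add_apply, innerₗ_apply_apply, smul_eq_mul]
    ring
  have hhom (c : ℝ) (v : E) : ⟪c • v, CLM H (c • v)⟫ = c ^ 2 * ⟪v, CLM H v⟫ := by
    rw [map_smul, real_inner_smul_left, real_inner_smul_right]
    ring
  refine hconv.add_le_of_forall_le (Q := fun v => ⟪v, CLM H v⟫) hhom fun z => ?_
  have := hmin z
  rw [hq, hq] at this
  linarith

/-- if `ȳ` minimizes `q`, then `ℓ(x) ≥ ℓ(ȳ) + (ȳ-x)ᵀH(ȳ-x)`. -/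
theorem stmt_15
    (f : E → ℝ) (g : E → E)
    (hg : ∀ y, HasGradientAt f (g y) y)
    (μ : ℝ) (hμ : 0 < μ)
    (x : E)
    (H : Matrix (Fin n) (Fin n) ℝ) (hpd : H.PosDef)
    (ℓ q : E → ℝ)
    (hℓ : ∀ y, ℓ y = f x + ⟪g x, y - x⟫ + μ * ∑ i, |y i|)
    (hq : ∀ y, q y = ℓ y + (1 / 2) * ⟪y - x, CLM H (y - x)⟫)
    (ybar : E) (hmin : ∀ z, q ybar ≤ q z) :
    ℓ x ≥ ℓ ybar + ⟪ybar - x, CLM H (ybar - x)⟫ :=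
  stmt_15_general f g μ hμ x H ℓ q hℓ hq ybar hmin
end
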